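/- For r, s, θ ∈ ℝ, the matrix H = !![r·exp(iθ), s; s, r·exp(-iθ)] has all eigenvalues real if and only if s² ≥ r² sin²θ. -/
import Mathlib


open Matrix Complex

theorem stmt19 (r s θ : ℝ)
    (H : Matrix (Fin 2) (Fin 2) ℂ)
    (hH : H = !![(r : ℂ) * Complex.exp (I * θ), (s : ℂ);
                 (s : ℂ), (r : ℂ) * Complex.exp (-(I * θ))]) :
    (∀ μ : ℂ, (H - μ • 1).det = 0 → μ.im = 0) ↔
      s ^ 2 ≥ r ^ 2 * Real.sin θ ^ 2 := by
  have hpyC : Complex.sin θ ^ 2 + Complex.cos θ ^ 2 = 1 :=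
    Complex.sin_sq_add_cos_sq (θ : ℂ)
  have h1 : Complex.exp (I * θ) * Complex.exp (-(I * θ)) = 1 := by
    rw [← Complex.exp_add]; simp
  have h2 : Complex.exp (I * θ) + Complex.exp (-(I * θ)) = 2 * Complex.cos (θ : ℂ) := by
    rw [mul_comm I (θ : ℂ), Complex.exp_mul_I, ← neg_mul, Complex.exp_mul_I,
      Complex.cos_neg, Complex.sin_neg]
    ring
  have hdet : ∀ μ : ℂ, (H - μ • 1).det
      = μ ^ 2 - 2 * ((r : ℂ) * (Real.cos θ : ℂ)) * μ + ((r : ℂ) ^ 2 - (s : ℂ) ^ 2) := by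
    intro μ
    subst hH
    simp [Matrix.det_fin_two, Matrix.one_apply]
    linear_combination (r : ℂ) ^ 2 * h1 - (r : ℂ) * μ * h2
  set a : ℝ := r * Real.cos θ with ha
  set d : ℝ := s ^ 2 - r ^ 2 * Real.sin θ ^ 2 with hd
  have hdC : (d : ℂ) = (s : ℂ) ^ 2 - (r : ℂ) ^ 2 * Complex.sin (θ : ℂ) ^ 2 := by
    rw [hd]; push_cast; ring
  constructor
  · intro hall
    by_contra hlt
    push_neg at hlt
    have hdneg : d < 0 := by rw [hd]; linarith
    set b : ℝ := Real.sqrt (-d) with hb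
    have hb2 : b ^ 2 = -d := Real.sq_sqrt (by linarith)
    have hbpos : 0 < b := Real.sqrt_pos.mpr (by linarith)
    set μ : ℂ := (a : ℂ) + (b : ℝ) * I with hμ
    have hdet0 : (H - μ • 1).det = 0 := by
      rw [hdet]
      have hb2C : (b : ℂ) ^ 2 = -(d : ℂ) := by exact_mod_cast hb2
      rw [hμ]
      push_cast [ha]
      linear_combination (b : ℂ) ^ 2 * Complex.I_sq - hb2C + hdC - (r : ℂ) ^ 2 * hpyC
    have := hall μ hdet0
    rw [hμ] at this
    simp at this
    linarith
  · intro hge μ hμ0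
    rw [hdet μ] at hμ0
    push_cast at hμ0
    have hdnn : 0 ≤ d := by rw [hd]; linarith
    set b : ℝ := Real.sqrt d with hb
    have hb2 : b ^ 2 = d := Real.sq_sqrt hdnn
    have hb2C : (b : ℂ) ^ 2 = (d : ℂ) := by exact_mod_cast hb2
    have hfac : (μ - (a : ℂ) - (b : ℂ)) * (μ - (a : ℂ) + (b : ℂ)) = 0 := by
      push_cast [ha]
      linear_combination hμ0 - hb2C - hdC + (r : ℂ) ^ 2 * hpyC
    rcases mul_eq_zero.mp hfac with h | h
    · have : μ = ((a + b : ℝ) : ℂ) := by push_cast; linear_combination h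
      rw [this]; simp
    · have : μ = ((a - b : ℝ) : ℂ) := by push_cast; linear_combination h
      rw [this]; simp
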